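/- Let C be an n×n real symmetric positive-semidefinite matrix and let 0 < s < n be an integer with s < rank(C). Then the scaled linx bound tends to +∞ as the scaling parameter tends to +∞: lim_{γ→+∞} linx(C,s;γ) = +∞. -/

import Mathlib

/-!
At the uniform point `x = (s/n) e` of `P(n,s)` the matrix is `γ a C² + (1 - a) I` with `a = s/n`,
whose determinant is `∏ᵢ (γ a λᵢ² + 1 - a)` over the eigenvalues `λᵢ` of `C`. Each of the
`rank C` factors with `λᵢ ≠ 0` grows linearly in `γ`, so for `γ ≥ 1` the determinant is at least
`κ γ ^ rank C` with `κ > 0`, and `linx(C,s;γ) ≥ ((rank C - s) log γ + log κ) / 2 → ∞`.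
-/

open Matrix Real Set Filter

noncomputable section

/-- The feasible polytope `P(n,s)`. -/
def PP (n s : ℕ) : Set (Fin n → ℝ) :=
  {x | (∑ i, x i) = (s : ℝ) ∧ ∀ i, 0 ≤ x i ∧ x i ≤ 1}

/-- The scaled linx objective `f(C,s;γ;x)`. -/
def fLinxScaled {n : ℕ} (C : Matrix (Fin n) (Fin n) ℝ) (s : ℕ) (γ : ℝ) (x : Fin n → ℝ) : ℝ :=
  (1 / 2) * (Real.log ((γ • (C * Matrix.diagonal x * C) + Matrix.diagonal fun i => 1 - x i).det)
    - (s : ℝ) * Real.log γ)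

/-- The scaled linx bound `linx(C,s;γ)`. -/
def linxScaled (n s : ℕ) (C : Matrix (Fin n) (Fin n) ℝ) (γ : ℝ) : ℝ :=
  sSup (fLinxScaled C s γ '' PP n s)

namespace Matrix.IsHermitian

variable {ι : Type*} [Fintype ι] [DecidableEq ι] {A : Matrix ι ι ℝ}

theorem det_cfc (hA : A.IsHermitian) (f : ℝ → ℝ) :
    (cfc f A).det = ∏ i, f (hA.eigenvalues i) := by
  simp [hA.cfc_eq, IsHermitian.cfc, -Unitary.conjStarAlgAut_apply]

theorem det_smul_mul_self_add_smul_one (hA : A.IsHermitian) (t c : ℝ) :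
    (t • (A * A) + c • 1).det = ∏ i, (t * hA.eigenvalues i ^ 2 + c) := by
  have hcfc : cfc (fun x => t * x ^ 2 + c) A = t • (A * A) + c • 1 := by
    rw [cfc_add .., cfc_const_mul .., cfc_pow .., cfc_id' .., cfc_const ..]
    simp [pow_two, Algebra.algebraMap_eq_smul_one]
  rw [← hcfc, hA.det_cfc]

end Matrix.IsHermitian

theorem pow_card_mul_prod_le_prod_mul_add {ι : Type*} [Fintype ι] {b : ι → ℝ}
    (hb : ∀ i, 0 ≤ b i) {c γ : ℝ} (hc : 0 ≤ c) (hγ : 1 ≤ γ) :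
    γ ^ (Finset.univ.filter fun i => b i ≠ 0).card * ∏ i, (if b i = 0 then c else b i)
      ≤ ∏ i, (γ * b i + c) := by
  have hpow : γ ^ (Finset.univ.filter fun i => b i ≠ 0).card
      = ∏ i, γ ^ (if b i = 0 then 0 else 1) := by
    rw [Finset.prod_pow_eq_pow_sum, Finset.card_filter]
    simp only [ite_not]
  rw [hpow, ← Finset.prod_mul_distrib]
  refine Finset.prod_le_prod (fun i _ => ?_) (fun i _ => ?_)
  · have := hb i
    split_ifs <;> positivity
  · split_ifs with hbi
    · simp [hbi]
    · nlinarith [hb i]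

theorem isCompact_PP (n s : ℕ) : IsCompact (PP n s) := by
  have hPP : PP n s = {x : Fin n → ℝ | ∑ i, x i = s} ∩ Icc 0 1 := by
    ext x
    simp [PP, Pi.le_def, forall_and]
  rw [hPP]
  exact isCompact_Icc.inter_left (isClosed_eq (by fun_prop) continuous_const)

theorem const_mem_PP {n s : ℕ} (hsn : s ≤ n) : (fun _ => (s : ℝ) / n) ∈ PP n s := by
  refine ⟨?_, fun _ => ⟨by positivity, div_le_one_of_le₀ (by exact_mod_cast hsn) n.cast_nonneg⟩⟩
  rcases Nat.eq_zero_or_pos n with rfl | hn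
  · simp [Nat.le_zero.mp hsn]
  · simp only [Finset.sum_const, Finset.card_univ, Fintype.card_fin, nsmul_eq_mul]
    field_simp

theorem bddAbove_fLinxScaled_image (n s : ℕ) (C : Matrix (Fin n) (Fin n) ℝ) (γ : ℝ) :
    BddAbove (fLinxScaled C s γ '' PP n s) := by
  have hcont : Continuous fun x : Fin n → ℝ =>
      (γ • (C * diagonal x * C) + diagonal fun i => 1 - x i).det := by
    refine Continuous.matrix_det (Continuous.add ?_ (Continuous.matrix_diagonal (by fun_prop)))
    exact ((continuous_const.matrix_mul (Continuous.matrix_diagonal continuous_id)).matrix_mul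
      continuous_const).const_smul γ
  obtain ⟨M, hM⟩ := (isCompact_PP n s).exists_bound_of_continuousOn hcont.continuousOn
  refine ⟨(1 / 2) * (M - s * Real.log γ), ?_⟩
  rintro _ ⟨x, hx, rfl⟩
  -- `log d = log |d| ≤ |d|` holds for every real `d`, including the junk value `log 0 = 0`.
  have hlog := (Real.log_abs _).symm.trans_le ((Real.log_le_self (abs_nonneg _)).trans (hM x hx))
  unfold fLinxScaled
  linarith

theorem fLinxScaled_le_linxScaled {n s : ℕ} (C : Matrix (Fin n) (Fin n) ℝ) (γ : ℝ)
    {x : Fin n → ℝ} (hx : x ∈ PP n s) : fLinxScaled C s γ x ≤ linxScaled n s C γ :=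
  le_csSup (bddAbove_fLinxScaled_image n s C γ) (mem_image_of_mem _ hx)

theorem fLinxScaled_const {n : ℕ} {C : Matrix (Fin n) (Fin n) ℝ} (hC : C.IsHermitian)
    (s : ℕ) (γ a : ℝ) :
    fLinxScaled C s γ (fun _ => a)
      = (1 / 2) * (Real.log (∏ i, (γ * a * hC.eigenvalues i ^ 2 + (1 - a))) - s * Real.log γ) := by
  have hdiag : ∀ b : ℝ, diagonal (fun _ : Fin n => b) = b • 1 := fun b =>
    (smul_one_eq_diagonal b).symm
  rw [fLinxScaled, hdiag, hdiag, Matrix.mul_smul, mul_one, Matrix.smul_mul, smul_smul,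
    hC.det_smul_mul_self_add_smul_one]

theorem exists_rank_mul_log_le_linxScaled {n s : ℕ} (hs : 0 < s) (hsn : s < n)
    {C : Matrix (Fin n) (Fin n) ℝ} (hC : C.IsHermitian) :
    ∃ K : ℝ, ∀ γ ≥ 1, (1 / 2) * ((C.rank - s) * Real.log γ + K) ≤ linxScaled n s C γ := by
  have hn : (0 : ℝ) < n := by exact_mod_cast hs.trans hsn
  set a : ℝ := s / n
  have ha : 0 < a := div_pos (by exact_mod_cast hs) hn
  have ha1 : a < 1 := (div_lt_one hn).2 (by exact_mod_cast hsn)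
  set b : Fin n → ℝ := fun i => a * hC.eigenvalues i ^ 2
  have hb : ∀ i, 0 ≤ b i := fun i => by positivity
  have hcard : (Finset.univ.filter fun i => b i ≠ 0).card = C.rank := by
    rw [hC.rank_eq_card_non_zero_eigs, Fintype.card_subtype]
    simp [b, ha.ne']
  set κ : ℝ := ∏ i, (if b i = 0 then 1 - a else b i)
  have hκ : 0 < κ := Finset.prod_pos fun i _ => by
    split_ifs with hbi
    · linarith
    · exact (hb i).lt_of_ne' hbi
  refine ⟨Real.log κ, fun γ hγ => ?_⟩
  have hprod := pow_card_mul_prod_le_prod_mul_add hb (sub_pos.2 ha1).le hγ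
  rw [hcard] at hprod
  calc (1 / 2) * ((C.rank - s) * Real.log γ + Real.log κ)
      = (1 / 2) * (Real.log (γ ^ C.rank * κ) - s * Real.log γ) := by
        rw [Real.log_mul (by positivity) hκ.ne', Real.log_pow]
        ring
    _ ≤ (1 / 2) * (Real.log (∏ i, (γ * b i + (1 - a))) - s * Real.log γ) := by
        gcongr
    _ = fLinxScaled C s γ (fun _ => a) := by
        simp only [fLinxScaled_const hC, b, mul_assoc]
    _ ≤ linxScaled n s C γ := fLinxScaled_le_linxScaled C γ (const_mem_PP hsn.le)

theorem stmt_17 (n s : ℕ) (hs : 0 < s) (hsn : s < n)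
    (C : Matrix (Fin n) (Fin n) ℝ) (hC : C.PosSemidef) (hrank : s < C.rank) :
    Filter.Tendsto (fun γ : ℝ => linxScaled n s C γ)
      Filter.atTop Filter.atTop := by
  obtain ⟨K, hK⟩ := exists_rank_mul_log_le_linxScaled hs hsn hC.isHermitian
  have hgap : (0 : ℝ) < C.rank - s := sub_pos.2 (by exact_mod_cast hrank)
  refine tendsto_atTop_mono' _ ((eventually_ge_atTop 1).mono hK) ?_
  exact ((tendsto_log_atTop.const_mul_atTop hgap).atTop_add tendsto_const_nhds).const_mul_atTop
    one_half_pos
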